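/- arXiv:1709.08281 — 4 statements merged into one kernel-verified Lean document; each statement's English description precedes it below -/
import Mathlib

section
/- Let I be a nonempty finite index set with a distinguished element i0 ∈ I. The map sending p = (p_i)_{i ∈ I} ∈ (0,1)^I to ((p_i/p_{i0})_{i ∈ I, i ≠ i0}, ∏_{i ∈ I} p_i/(1 − p_i)) is a bijection from (0,1)^I onto (0,∞)^{I∖{i0}} × (0,∞). -/
/-!
Fix the ratios `r i = p i / p i0` (so `r i0 = 1`). The points of `(0,1)^I` with these ratios
form the ray `s • r`, `0 < s < 1 / max r`, and along it the odds product is continuous and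
strictly increasing, tends to `0` as `s → 0`, and tends to `∞` as `s → 1 / max r`: the factor
of a maximal coordinate blows up while the others stay bounded below. So it takes every
positive value exactly once.
-/

open Set Filter Topology

noncomputable def odds (x : ℝ) : ℝ := x / (1 - x)

lemma odds_pos {x : ℝ} (hx : x ∈ Ioo 0 1) : 0 < odds x :=
  div_pos hx.1 (sub_pos.2 hx.2)

lemma strictMonoOn_odds : StrictMonoOn odds (Iio 1) := by
  intro x hx y hy hxy
  have hx' : 0 < 1 - x := sub_pos.2 hx
  have hy' : 0 < 1 - y := sub_pos.2 hy
  rw [odds, odds, div_lt_div_iff₀ hx' hy']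
  nlinarith

lemma continuousOn_odds : ContinuousOn odds (Iio 1) :=
  continuousOn_id.div (by fun_prop) fun _ hx => (sub_pos.2 hx).ne'

lemma tendsto_odds_nhdsLT_one : Tendsto odds (𝓝[<] 1) atTop := by
  have h : Tendsto (fun x : ℝ => 1 - x) (𝓝[<] 1) (𝓝[>] 0) :=
    tendsto_nhdsWithin_iff.2
      ⟨by simpa using ((continuous_sub_left (1 : ℝ)).tendsto 1).mono_left nhdsWithin_le_nhds,
        eventually_nhdsWithin_of_forall fun _ hx => sub_pos.2 (mem_Iio.1 hx)⟩
  have hid : Tendsto (fun x : ℝ => x) (𝓝[<] 1) (𝓝 1) :=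
    tendsto_nhdsWithin_of_tendsto_nhds tendsto_id
  exact hid.pos_mul_atTop one_pos (tendsto_inv_nhdsGT_zero.comp h)

lemma mul_mem_Ioo_of_mem_Ioc {c u : ℝ} (hc : c ∈ Ioc 0 1) (hu : u ∈ Ioo 0 1) :
    c * u ∈ Ioo 0 1 :=
  ⟨mul_pos hc.1 hu.1, (mul_le_of_le_one_left hu.1.le hc.2).trans_lt hu.2⟩

lemma lt_of_div_eq_div_of_lt {I : Type*} {p q : I → ℝ} {i0 : I} (hp0 : 0 < p i0)
    (hq : ∀ i, 0 < q i) (hdiv : ∀ i ≠ i0, p i / p i0 = q i / q i0) (h : p i0 < q i0) (i : I) :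
    p i < q i := by
  rcases eq_or_ne i i0 with rfl | hi
  · exact h
  · have hcross := hdiv i hi
    rw [div_eq_div_iff hp0.ne' (hq i0).ne'] at hcross
    nlinarith [hq i0, mul_lt_mul_of_pos_left h (hq i)]

section
variable {I : Type*} [Fintype I]

lemma prod_odds_lt_prod_odds [Nonempty I] {p q : I → ℝ} (hp : ∀ i, 0 < p i)
    (hq : ∀ i, q i < 1) (hpq : ∀ i, p i < q i) : ∏ i, odds (p i) < ∏ i, odds (q i) :=
  Finset.prod_lt_prod_of_nonempty (fun i _ => odds_pos ⟨hp i, (hpq i).trans (hq i)⟩)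
    (fun i _ => strictMonoOn_odds ((hpq i).trans (hq i)) (hq i) (hpq i)) Finset.univ_nonempty

lemma eq_of_div_eq_of_prod_odds_eq {p q : I → ℝ} (hp : ∀ i, p i ∈ Ioo 0 1)
    (hq : ∀ i, q i ∈ Ioo 0 1) {i0 : I} (hdiv : ∀ i ≠ i0, p i / p i0 = q i / q i0)
    (hodds : ∏ i, odds (p i) = ∏ i, odds (q i)) : p = q := by
  have : Nonempty I := ⟨i0⟩
  have h0 : p i0 = q i0 := by
    rcases lt_trichotomy (p i0) (q i0) with h | h | h
    · refine absurd hodds (prod_odds_lt_prod_odds (fun i => (hp i).1) (fun i => (hq i).2) ?_).ne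
      exact lt_of_div_eq_div_of_lt (hp i0).1 (fun i => (hq i).1) hdiv h
    · exact h
    · refine absurd hodds.symm
        (prod_odds_lt_prod_odds (fun i => (hq i).1) (fun i => (hp i).2) ?_).ne
      exact lt_of_div_eq_div_of_lt (hq i0).1 (fun i => (hp i).1) (fun i hi => (hdiv i hi).symm) h
  funext i
  rcases eq_or_ne i i0 with rfl | hi
  · exact h0
  · rw [h0] at hdiv
    exact (div_left_inj' (hq i0).1.ne').1 (hdiv i hi)

lemma exists_prod_odds_mul_eq {c : I → ℝ} (hc : ∀ i, c i ∈ Ioc 0 1) {j : I} (hj : c j = 1)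
    {t : ℝ} (ht : 0 < t) : ∃ u ∈ Ioo 0 1, ∏ i, odds (c i * u) = t := by
  set G : ℝ → ℝ := fun u => ∏ i, odds (c i * u)
  have hmem : ∀ u ∈ Ioo (0 : ℝ) 1, ∀ i, c i * u ∈ Ioo 0 1 := fun u hu i =>
    mul_mem_Ioo_of_mem_Ioc (hc i) hu
  have hcont : ContinuousOn G (Ioo 0 1) :=
    continuousOn_finsetProd _ fun i _ =>
      continuousOn_odds.comp (by fun_prop) fun u hu => (hmem u hu i).2
  have hzero : Tendsto G (𝓝[>] 0) (𝓝 0) := by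
    have : ContinuousAt G 0 :=
      tendsto_finsetProd _ fun i _ =>
        (continuousOn_odds.continuousAt (Iio_mem_nhds (by simp))).comp (by fun_prop)
    have hG0 : G 0 = 0 := Finset.prod_eq_zero (Finset.mem_univ j) (by simp [odds])
    simpa only [hG0] using this.tendsto.mono_left nhdsWithin_le_nhds
  have hone : Tendsto G (𝓝[<] 1) atTop := by
    classical
    have hhalf : (1 / 2 : ℝ) ∈ Ioo 0 1 := by norm_num
    set C := ∏ i ∈ Finset.univ.erase j, odds (c i * (1 / 2))
    have hC : 0 < C := Finset.prod_pos fun i _ => odds_pos (hmem _ hhalf i)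
    have hbound : ∀ u ∈ Ioo (1 / 2 : ℝ) 1, odds u * C ≤ G u := by
      intro u hu
      have hu0 : u ∈ Ioo (0 : ℝ) 1 := ⟨by linarith [hu.1], hu.2⟩
      rw [show G u = _ from (Finset.mul_prod_erase _ _ (Finset.mem_univ j)).symm, hj, one_mul]
      refine mul_le_mul_of_nonneg_left (Finset.prod_le_prod
        (fun i _ => (odds_pos (hmem _ hhalf i)).le) fun i _ => ?_) (odds_pos hu0).le
      exact strictMonoOn_odds.monotoneOn (hmem _ hhalf i).2 (hmem u hu0 i).2
        (mul_le_mul_of_nonneg_left hu.1.le (hc i).1.le)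
    refine tendsto_atTop_mono' _ ?_ (tendsto_odds_nhdsLT_one.atTop_mul_const hC)
    filter_upwards [Ioo_mem_nhdsLT (show (1 / 2 : ℝ) < 1 by norm_num)] using hbound
  obtain ⟨u, hu, hGu⟩ := isPreconnected_Ioo.intermediate_value_Ioi
    (le_principal_iff.2 (Ioo_mem_nhdsGT one_pos)) (le_principal_iff.2 (Ioo_mem_nhdsLT one_pos))
    hcont hzero hone ht
  exact ⟨u, hu, hGu⟩

lemma exists_prod_odds_eq [Nonempty I] {R : I → ℝ} (hR : ∀ i, 0 < R i) {t : ℝ}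
    (ht : 0 < t) :
    ∃ s, (∀ i, R i * s ∈ Ioo 0 1) ∧ ∏ i, odds (R i * s) = t := by
  obtain ⟨j, hj⟩ := Finite.exists_max R
  have hc : ∀ i, R i / R j ∈ Ioc 0 1 := fun i =>
    ⟨div_pos (hR i) (hR j), (div_le_one (hR j)).2 (hj i)⟩
  obtain ⟨u, hu, hodds⟩ := exists_prod_odds_mul_eq hc (div_self (hR j).ne') ht
  have hscale : ∀ i, R i * (u / R j) = R i / R j * u := fun i => by ring
  refine ⟨u / R j, fun i => ?_, by simpa only [hscale] using hodds⟩
  rw [hscale]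
  exact mul_mem_Ioo_of_mem_Ioc (hc i) hu

end

theorem stmt_1_general {I : Type*} [Fintype I] (i0 : I) :
    Set.BijOn
      (fun p : I → ℝ =>
        ((fun i : {i : I // i ≠ i0} => p i / p i0, ∏ i : I, p i / (1 - p i)) :
          ({i : I // i ≠ i0} → ℝ) × ℝ))
      {p : I → ℝ | ∀ i, p i ∈ Set.Ioo (0 : ℝ) 1}
      {q : ({i : I // i ≠ i0} → ℝ) × ℝ | (∀ i, 0 < q.1 i) ∧ 0 < q.2} := by
  classical
  refine ⟨fun p hp => ⟨fun i => div_pos (hp i).1 (hp i0).1,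
    Finset.prod_pos fun i _ => odds_pos (hp i)⟩, ?_, ?_⟩
  · intro p hp q hq h
    obtain ⟨hdiv, hodds⟩ := Prod.ext_iff.1 h
    exact eq_of_div_eq_of_prod_odds_eq hp hq (fun i hi => congrFun hdiv ⟨i, hi⟩) hodds
  · rintro ⟨r, t⟩ ⟨hr, ht⟩
    let R : I → ℝ := fun i => if h : i = i0 then 1 else r ⟨i, h⟩
    have hR : ∀ i, 0 < R i := fun i => by
      unfold R
      split_ifs
      exacts [one_pos, hr _]
    have : Nonempty I := ⟨i0⟩
    obtain ⟨s, hs, hodds⟩ := exists_prod_odds_eq hR ht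
    refine ⟨fun i => R i * s, hs, Prod.ext (funext fun i => ?_) hodds⟩
    have hs0 : 0 < s := by simpa [R] using (hs i0).1
    simp [R, i.2, hs0.ne']

/-- For a nonempty finite index set `I` with distinguished element `i0`,
the map sending `p ∈ (0,1)^I` to the ratios `p i / p i0` (for `i ≠ i0`) together with the
generalized odds product `∏ i, p i / (1 - p i)` is a bijection from `(0,1)^I` onto
`(0,∞)^{I \ {i0}} × (0,∞)`. -/
theorem stmt_1 {I : Type*} [Fintype I] [Nonempty I] (i0 : I) :
    Set.BijOn
      (fun p : I → ℝ =>
        ((fun i : {i : I // i ≠ i0} => p i / p i0, ∏ i : I, p i / (1 - p i)) :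
          ({i : I // i ≠ i0} → ℝ) × ℝ))
      {p : I → ℝ | ∀ i, p i ∈ Set.Ioo (0 : ℝ) 1}
      {q : ({i : I // i ≠ i0} → ℝ) × ℝ | (∀ i, 0 < q.1 i) ∧ 0 < q.2} :=
  stmt_1_general i0
end

section
/- Let I be a nonempty finite index set of cardinality n, let k = (k_i)_{i ∈ I} with k_i ∈ (0,1] for all i and k_j = 1 for some j ∈ I, and let c > 0. Then the function g(x) = ∑_{i ∈ I} log(k_i) + n·log(x) − ∑_{i ∈ I} log(1 − k_i·x) − log(c) has exactly one root in the open interval (0,1). -/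
open Real Filter Set Topology

/-!
On `(0,1)`, `∑ log kᵢ + n log x - ∑ log (1 - kᵢ x)` (with `n = card I`) is continuous and
strictly increasing (`n log x` increases strictly, each `-log (1 - kᵢ x)` weakly).
It tends to `-∞` at `0⁺` through `n log x`, and to `+∞` at `1⁻` because the term with `kⱼ = 1` is
`-log (1 - x)` while the others are nonnegative. Hence it takes every real value exactly once,
in particular `log c`.
-/

theorem StrictMonoOn.existsUnique_mem_Ioo_eq {α δ : Type*} [ConditionallyCompleteLinearOrder α]
    [TopologicalSpace α] [OrderTopology α] [DenselyOrdered α] [LinearOrder δ] [TopologicalSpace δ]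
    [OrderClosedTopology δ] {f : α → δ} {a b : α} (hab : a < b) (hf : StrictMonoOn f (Ioo a b))
    (hcont : ContinuousOn f (Ioo a b)) (hbot : Tendsto f (𝓝[>] a) atBot)
    (htop : Tendsto f (𝓝[<] b) atTop) (y : δ) : ∃! x, x ∈ Ioo a b ∧ f x = y := by
  obtain ⟨x, hx, rfl⟩ := hcont.surjOn_of_tendsto (nonempty_Ioo.2 hab)
    ((tendsto_comp_coe_Ioo_atBot hab).2 hbot) ((tendsto_comp_coe_Ioo_atTop hab).2 htop)
    (mem_univ y)
  exact ⟨x, ⟨hx, rfl⟩, fun z hz => hf.injOn hz.1 hx hz.2⟩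

theorem tendsto_neg_log_one_sub_nhdsLT_one :
    Tendsto (fun x => -log (1 - x)) (𝓝[<] 1) atTop := by
  refine tendsto_neg_atBot_atTop.comp (tendsto_log_nhdsGT_zero.comp ?_)
  have := ((continuous_sub_left (1 : ℝ)).tendsto' 1 0 (sub_self 1)).mono_left
    (nhdsWithin_le_nhds (s := Iio 1))
  exact tendsto_nhdsWithin_iff.2 ⟨this, eventually_nhdsWithin_of_forall fun x hx => mem_Ioi.2 (sub_pos.2 hx)⟩

section

variable {I : Type*} [Fintype I] {k : I → ℝ}

/-- On `(0,1)` this is `log ∏ᵢ (kᵢ x) / (1 - kᵢ x)`, the log of the generalized odds product. -/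
noncomputable def logOddsProduct (k : I → ℝ) (x : ℝ) : ℝ :=
  (∑ i, log (k i)) + (Fintype.card I : ℝ) * log x - ∑ i, log (1 - k i * x)

lemma one_sub_mul_pos {t x : ℝ} (ht : t ≤ 1) (hx : x ∈ Ioo (0 : ℝ) 1) : 0 < 1 - t * x := by
  nlinarith [hx.1, hx.2]

lemma strictMonoOn_logOddsProduct [Nonempty I] (hk : ∀ i, k i ∈ Icc (0 : ℝ) 1) :
    StrictMonoOn (logOddsProduct k) (Ioo 0 1) := by
  intro x hx y hy hxy
  have hlog : log x < log y := log_lt_log hx.1 hxy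
  have hsum : ∑ i, log (1 - k i * y) ≤ ∑ i, log (1 - k i * x) :=
    Finset.sum_le_sum fun i _ => log_le_log (one_sub_mul_pos (hk i).2 hy) <| by
      nlinarith [(hk i).1]
  have hn : (0 : ℝ) < Fintype.card I := by exact_mod_cast Fintype.card_pos
  unfold logOddsProduct
  nlinarith

lemma continuousOn_logOddsProduct (hk : ∀ i, k i ≤ 1) :
    ContinuousOn (logOddsProduct k) (Ioo 0 1) := by
  refine ContinuousOn.sub (by fun_prop (disch := exact fun x hx => hx.1.ne')) ?_
  exact continuousOn_finsetSum _ fun i _ =>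
    ContinuousOn.log (by fun_prop) fun x hx => (one_sub_mul_pos (hk i) hx).ne'

lemma tendsto_logOddsProduct_nhdsGT_zero [Nonempty I] :
    Tendsto (logOddsProduct k) (𝓝[>] 0) atBot := by
  have hn : (0 : ℝ) < Fintype.card I := by exact_mod_cast Fintype.card_pos
  have hrest : Tendsto (fun x => (∑ i, log (k i)) - ∑ i, log (1 - k i * x)) (𝓝[>] 0)
      (𝓝 ((∑ i, log (k i)) - ∑ i, log (1 - k i * 0))) :=
    (ContinuousAt.tendsto (by fun_prop (disch := simp))).mono_left nhdsWithin_le_nhds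
  refine (hrest.add_atBot (tendsto_log_nhdsGT_zero.const_mul_atBot hn)).congr fun x => ?_
  unfold logOddsProduct
  ring

lemma sum_log_one_sub_mul_le (hk : ∀ i, k i ∈ Icc (0 : ℝ) 1) {j : I} (hj : k j = 1) {x : ℝ}
    (hx : x ∈ Ioo (0 : ℝ) 1) : ∑ i, log (1 - k i * x) ≤ log (1 - x) := by
  have hnonneg : ∀ i ∈ Finset.univ, 0 ≤ -log (1 - k i * x) := fun i _ =>
    neg_nonneg.2 <| log_nonpos (one_sub_mul_pos (hk i).2 hx).le <| by nlinarith [(hk i).1, hx.1]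
  have := Finset.single_le_sum hnonneg (Finset.mem_univ j)
  rw [Finset.sum_neg_distrib, hj, one_mul] at this
  linarith

lemma tendsto_logOddsProduct_nhdsLT_one (hk : ∀ i, k i ∈ Icc (0 : ℝ) 1) {j : I} (hj : k j = 1) :
    Tendsto (logOddsProduct k) (𝓝[<] 1) atTop := by
  have hcont : Tendsto (fun x => (∑ i, log (k i)) + (Fintype.card I : ℝ) * log x) (𝓝[<] 1)
      (𝓝 ((∑ i, log (k i)) + (Fintype.card I : ℝ) * log 1)) :=
    ((continuousAt_log one_ne_zero).const_mul _ |>.const_add _).tendsto.mono_left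
      nhdsWithin_le_nhds
  refine tendsto_atTop_mono' _ ?_ (hcont.add_atTop tendsto_neg_log_one_sub_nhdsLT_one)
  filter_upwards [Ioo_mem_nhdsLT (zero_lt_one' ℝ)] with x hx
  have := sum_log_one_sub_mul_le hk hj hx
  unfold logOddsProduct
  linarith

theorem existsUnique_logOddsProduct_eq [Nonempty I] (hk : ∀ i, k i ∈ Icc (0 : ℝ) 1) {j : I}
    (hj : k j = 1) (y : ℝ) : ∃! x, x ∈ Ioo (0 : ℝ) 1 ∧ logOddsProduct k x = y :=
  (strictMonoOn_logOddsProduct hk).existsUnique_mem_Ioo_eq one_pos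
    (continuousOn_logOddsProduct fun i => (hk i).2) tendsto_logOddsProduct_nhdsGT_zero
    (tendsto_logOddsProduct_nhdsLT_one hk hj) y

end

theorem stmt_3_general {I : Type*} [Fintype I] [Nonempty I] (k : I → ℝ)
    (hk : ∀ i, k i ∈ Set.Ioc (0 : ℝ) 1) (j : I) (hj : k j = 1) (c : ℝ) :
    ∃! x : ℝ, x ∈ Set.Ioo (0 : ℝ) 1 ∧
      (∑ i : I, Real.log (k i)) + (Fintype.card I : ℝ) * Real.log x
        - (∑ i : I, Real.log (1 - k i * x)) - Real.log c = 0 := by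
  simp only [sub_eq_zero]
  exact existsUnique_logOddsProduct_eq (fun i => Ioc_subset_Icc_self (hk i)) hj (log c)

/-- For a nonempty finite index set `I` of cardinality `n`, a vector `k` with
`k i ∈ (0,1]` for all `i` and `k j = 1` for some `j`, and `c > 0`, the function
`g(x) = ∑ i, log (k i) + n * log x - ∑ i, log (1 - k i * x) - log c` has exactly one root
in the open interval `(0,1)`. -/
theorem stmt_3 {I : Type*} [Fintype I] [Nonempty I] (k : I → ℝ)
    (hk : ∀ i, k i ∈ Set.Ioc (0 : ℝ) 1) (j : I) (hj : k j = 1) (c : ℝ) (hc : 0 < c) :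
    ∃! x : ℝ, x ∈ Set.Ioo (0 : ℝ) 1 ∧
      (∑ i : I, Real.log (k i)) + (Fintype.card I : ℝ) * Real.log x
        - (∑ i : I, Real.log (1 - k i * x)) - Real.log c = 0 :=
  stmt_3_general k hk j hj c
end

section
/- Let p = (p_{a0,l1,a1}) ∈ (0,1)^8 be indexed by (a0,l1,a1) ∈ {0,1}^3 and let η = (η0, η1) ∈ (0,1)^2. Define the additive blip parameters β* = [η1·p_{1,1,0} + (1 − η1)·p_{1,0,0}] − [η0·p_{0,1,0} + (1 − η0)·p_{0,0,0}] and β(a0,l1) = p_{a0,l1,1} − p_{a0,l1,0}. Then β* + η1·β(1,1) + (1 − η1)·β(1,0) ∈ (−1,1) for every such (p, η); in particular, there is no (p, η) ∈ (0,1)^8 × (0,1)^2 with β* = 9/10, β(1,1) = 9/10 and β(1,0) = 9/10, so the range of the parameter vector (β*, β(1,1), β(1,0), β(0,1), β(0,0)) over all (p, η) is a proper subset of (−1,1)^5. -/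
/-! The quantity `β* + η₁ β(1,1) + (1 - η₁) β(1,0)` telescopes to the difference of the two
g-formula means `E[Y(1,1)] - E[Y(0,0)]`; each mean is a convex combination of conditional means
in `(0,1)`, so it lies in `(0,1)`, and their difference lies in `(-1,1)`. -/

open Set

lemma mul_add_one_sub_mul_mem_Ioo {η x y a b : ℝ} (hη : η ∈ Icc 0 1) (hx : x ∈ Ioo a b)
    (hy : y ∈ Ioo a b) : η * x + (1 - η) * y ∈ Ioo a b := by
  simpa using convex_Ioo a b hx hy hη.1 (sub_nonneg.2 hη.2) (add_sub_cancel η 1)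

lemma sub_mem_Ioo_neg_one_one {x y : ℝ} (hx : x ∈ Ioo 0 1) (hy : y ∈ Ioo 0 1) :
    x - y ∈ Ioo (-1) 1 :=
  ⟨by linarith [hx.1, hy.2], by linarith [hx.2, hy.1]⟩

section GFormula

variable {p : Bool → Bool → Bool → ℝ} {η : Bool → ℝ}

/-- The g-formula mean `E[Y(a0,a1)]`, where `η a0 = P(L1 = 1 | A0 = a0)`. -/
def gFormulaMean (p : Bool → Bool → Bool → ℝ) (η : Bool → ℝ) (a0 a1 : Bool) : ℝ :=
  η a0 * p a0 true a1 + (1 - η a0) * p a0 false a1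

lemma gFormulaMean_mem_Ioo (hp : ∀ a0 l1 a1, p a0 l1 a1 ∈ Ioo (0 : ℝ) 1)
    (hη : ∀ b, η b ∈ Ioo (0 : ℝ) 1) (a0 a1 : Bool) : gFormulaMean p η a0 a1 ∈ Ioo 0 1 :=
  mul_add_one_sub_mul_mem_Ioo (Ioo_subset_Icc_self (hη a0)) (hp a0 true a1) (hp a0 false a1)

lemma gFormulaMean_sub_mem_Ioo (hp : ∀ a0 l1 a1, p a0 l1 a1 ∈ Ioo (0 : ℝ) 1)
    (hη : ∀ b, η b ∈ Ioo (0 : ℝ) 1) (a0 a1 a0' a1' : Bool) :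
    gFormulaMean p η a0 a1 - gFormulaMean p η a0' a1' ∈ Ioo (-1) 1 :=
  sub_mem_Ioo_neg_one_one (gFormulaMean_mem_Ioo hp hη a0 a1) (gFormulaMean_mem_Ioo hp hη a0' a1')

lemma blip_sum_eq_gFormulaMean_sub :
    ((η true * p true true false + (1 - η true) * p true false false)
        - (η false * p false true false + (1 - η false) * p false false false))
      + η true * (p true true true - p true true false)
      + (1 - η true) * (p true false true - p true false false)
      = gFormulaMean p η true true - gFormulaMean p η false false := by
  unfold gFormulaMean
  ring

theorem blip_sum_mem_Ioo (hp : ∀ a0 l1 a1, p a0 l1 a1 ∈ Ioo (0 : ℝ) 1)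
    (hη : ∀ b, η b ∈ Ioo (0 : ℝ) 1) :
    ((η true * p true true false + (1 - η true) * p true false false)
        - (η false * p false true false + (1 - η false) * p false false false))
      + η true * (p true true true - p true true false)
      + (1 - η true) * (p true false true - p true false false)
      ∈ Ioo (-1 : ℝ) 1 := by
  rw [blip_sum_eq_gFormulaMean_sub]
  exact gFormulaMean_sub_mem_Ioo hp hη _ _ _ _

end GFormula

/-- additive part of Proposition 1, K = 1: With `p ∈ (0,1)^8` indexed by
`(a0,l1,a1) ∈ {0,1}³` (encoded by `Bool`, `false = 0`, `true = 1`) and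
`η = (η0, η1) ∈ (0,1)²`, define
`β* = [η1·p_{1,1,0} + (1-η1)·p_{1,0,0}] - [η0·p_{0,1,0} + (1-η0)·p_{0,0,0}]` and
`β(a0,l1) = p_{a0,l1,1} - p_{a0,l1,0}`.  Then
`β* + η1·β(1,1) + (1-η1)·β(1,0) ∈ (-1,1)` always; in particular no `(p,η)` attains
`β* = β(1,1) = β(1,0) = 9/10`, so the range of `(β*, β(1,1), β(1,0), β(0,1), β(0,0))`
is a proper subset of `(-1,1)^5`. -/
theorem stmt_8 :
    (∀ pη : (Bool → Bool → Bool → ℝ) × (Bool → ℝ),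
      ((∀ a0 l1 a1, pη.1 a0 l1 a1 ∈ Set.Ioo (0 : ℝ) 1) ∧
        (∀ b, pη.2 b ∈ Set.Ioo (0 : ℝ) 1)) →
      ((pη.2 true * pη.1 true true false + (1 - pη.2 true) * pη.1 true false false)
          - (pη.2 false * pη.1 false true false
              + (1 - pη.2 false) * pη.1 false false false))
        + pη.2 true * (pη.1 true true true - pη.1 true true false)
        + (1 - pη.2 true) * (pη.1 true false true - pη.1 true false false)
        ∈ Set.Ioo (-1 : ℝ) 1) ∧
    (¬ ∃ pη : (Bool → Bool → Bool → ℝ) × (Bool → ℝ),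
      ((∀ a0 l1 a1, pη.1 a0 l1 a1 ∈ Set.Ioo (0 : ℝ) 1) ∧
        (∀ b, pη.2 b ∈ Set.Ioo (0 : ℝ) 1)) ∧
      ((pη.2 true * pη.1 true true false + (1 - pη.2 true) * pη.1 true false false)
          - (pη.2 false * pη.1 false true false
              + (1 - pη.2 false) * pη.1 false false false)) = 9 / 10 ∧
      pη.1 true true true - pη.1 true true false = 9 / 10 ∧
      pη.1 true false true - pη.1 true false false = 9 / 10) ∧
    ((fun pη : (Bool → Bool → Bool → ℝ) × (Bool → ℝ) =>
        (![(pη.2 true * pη.1 true true false + (1 - pη.2 true) * pη.1 true false false)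
            - (pη.2 false * pη.1 false true false
                + (1 - pη.2 false) * pη.1 false false false),
          pη.1 true true true - pη.1 true true false,
          pη.1 true false true - pη.1 true false false,
          pη.1 false true true - pη.1 false true false,
          pη.1 false false true - pη.1 false false false] : Fin 5 → ℝ)) ''
      {pη : (Bool → Bool → Bool → ℝ) × (Bool → ℝ) |
        (∀ a0 l1 a1, pη.1 a0 l1 a1 ∈ Set.Ioo (0 : ℝ) 1) ∧
        (∀ b, pη.2 b ∈ Set.Ioo (0 : ℝ) 1)}
      ⊂ {v : Fin 5 → ℝ | ∀ i, v i ∈ Set.Ioo (-1 : ℝ) 1}) := by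
  have no_nine_tenths : ¬ ∃ pη : (Bool → Bool → Bool → ℝ) × (Bool → ℝ),
      ((∀ a0 l1 a1, pη.1 a0 l1 a1 ∈ Set.Ioo (0 : ℝ) 1) ∧
        (∀ b, pη.2 b ∈ Set.Ioo (0 : ℝ) 1)) ∧
      ((pη.2 true * pη.1 true true false + (1 - pη.2 true) * pη.1 true false false)
          - (pη.2 false * pη.1 false true false
              + (1 - pη.2 false) * pη.1 false false false)) = 9 / 10 ∧
      pη.1 true true true - pη.1 true true false = 9 / 10 ∧
      pη.1 true false true - pη.1 true false false = 9 / 10 := by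
    rintro ⟨⟨p, η⟩, ⟨hp, hη⟩, hstar, h11, h10⟩
    have hsum := (blip_sum_mem_Ioo hp hη).2
    rw [hstar, h11, h10] at hsum
    linarith
  refine ⟨fun pη h => blip_sum_mem_Ioo h.1 h.2, no_nine_tenths,
    (ssubset_iff_of_subset ?_).2 ⟨fun _ => 9 / 10, fun _ => by norm_num, ?_⟩⟩
  · rintro _ ⟨⟨p, η⟩, ⟨hp, hη⟩, rfl⟩ i
    have hdiff a0 l1 : p a0 l1 true - p a0 l1 false ∈ Ioo (-1) 1 :=
      sub_mem_Ioo_neg_one_one (hp a0 l1 true) (hp a0 l1 false)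
    fin_cases i
    exacts [gFormulaMean_sub_mem_Ioo hp hη true false false false,
      hdiff true true, hdiff true false, hdiff false true, hdiff false false]
  · rintro ⟨pη, h, heq⟩
    exact no_nine_tenths ⟨pη, h, congrFun heq 0, congrFun heq 1, congrFun heq 2⟩
end

section
/- Let θ(a0,l1), φ(a0), and θ* be defined from (p, η) ∈ (0,1)^8 × (0,1)^2 by θ(a0,l1) = p_{a0,l1,1}/p_{a0,l1,0}, φ(a0) = p_{a0,1,0}/p_{a0,0,0}, and θ* = [(η1·φ(1) + 1 − η1)/(η0·φ(0) + 1 − η0)] · (p_{1,0,0}/p_{0,0,0}), where p = (p_{a0,l1,a1}) is indexed by (a0,l1,a1) ∈ {0,1}^3. Then for every (s, t11, t10, t01, t00) ∈ (0,∞)^5 and every (η0, η1) ∈ (0,1)^2 there exists p ∈ (0,1)^8 such that θ* = s and θ(a0,l1) = t_{a0,l1} for all (a0,l1) ∈ {0,1}^2. -/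
/-!
Take `p_{a0,l1,0}` independent of `l1`, equal to `c` for `a0 = 0` and `c s` for `a0 = 1`, and
`p_{a0,l1,1} = t_{a0,l1} p_{a0,l1,0}`. Then `φ(0) = φ(1) = 1`, so the g-formula factor is `1` whatever
`η0, η1` are and `θ* = p_{1,0,0}/p_{0,0,0} = s`. All ratios are invariant under the common scale `c`,
which is chosen small enough to put every entry in `(0,1)`.
-/

lemma exists_pos_mul_mem_Ioo {ι : Type*} [Fintype ι] (v : ι → ℝ) (hv : ∀ i, 0 < v i) :
    ∃ c > 0, ∀ i, c * v i ∈ Set.Ioo (0 : ℝ) 1 := by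
  have hsum : 0 ≤ ∑ i, v i := Finset.sum_nonneg fun i _ => (hv i).le
  refine ⟨(∑ i, v i + 1)⁻¹, by positivity, fun i => ⟨mul_pos (by positivity) (hv i), ?_⟩⟩
  rw [inv_mul_lt_one₀ (by positivity)]
  linarith [Finset.single_le_sum (fun j _ => (hv j).le) (Finset.mem_univ i)]

theorem stmt_9_general (s t11 t10 t01 t00 : ℝ) (hs : 0 < s) (ht11 : 0 < t11) (ht10 : 0 < t10)
    (ht01 : 0 < t01) (ht00 : 0 < t00) (η0 η1 : ℝ) :
    ∃ p : Bool → Bool → Bool → ℝ,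
      (∀ a0 l1 a1, p a0 l1 a1 ∈ Set.Ioo (0 : ℝ) 1) ∧
      ((η1 * (p true true false / p true false false) + 1 - η1) /
          (η0 * (p false true false / p false false false) + 1 - η0)) *
        (p true false false / p false false false) = s ∧
      p true true true / p true true false = t11 ∧
      p true false true / p true false false = t10 ∧
      p false true true / p false true false = t01 ∧
      p false false true / p false false false = t00 := by
  let t : Bool → Bool → ℝ := fun a0 l1 =>
    if a0 then (if l1 then t11 else t10) else (if l1 then t01 else t00)
  let q : Bool → Bool → Bool → ℝ := fun a0 l1 a1 =>
    (if a0 then s else 1) * (if a1 then t a0 l1 else 1)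
  have hq : ∀ x : Bool × Bool × Bool, 0 < q x.1 x.2.1 x.2.2 := by
    rintro ⟨_ | _, _ | _, _ | _⟩ <;> simp [q, t, *]
  obtain ⟨c, hc, hcq⟩ := exists_pos_mul_mem_Ioo _ hq
  refine ⟨fun a0 l1 a1 => c * q a0 l1 a1, fun a0 l1 a1 => hcq (a0, l1, a1), ?_⟩
  simp only [mul_div_mul_left _ _ hc.ne']
  simp [q, t, hs.ne']

/-- multiplicative part of Proposition 1, K = 1: With `p ∈ (0,1)^8` indexed
by `(a0,l1,a1) ∈ {0,1}³` (encoded by `Bool`, `false = 0`, `true = 1`), define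
`θ(a0,l1) = p_{a0,l1,1}/p_{a0,l1,0}`, `φ(a0) = p_{a0,1,0}/p_{a0,0,0}`, and
`θ* = [(η1·φ(1) + 1 - η1)/(η0·φ(0) + 1 - η0)] · (p_{1,0,0}/p_{0,0,0})`.  For every
`(s, t11, t10, t01, t00) ∈ (0,∞)^5` and every `(η0, η1) ∈ (0,1)²` there exists
`p ∈ (0,1)^8` with `θ* = s` and `θ(a0,l1) = t_{a0,l1}` for all `(a0,l1)`. -/
theorem stmt_9 (s t11 t10 t01 t00 : ℝ) (hs : 0 < s) (ht11 : 0 < t11) (ht10 : 0 < t10)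
    (ht01 : 0 < t01) (ht00 : 0 < t00) (η0 η1 : ℝ) (hη0 : η0 ∈ Set.Ioo (0 : ℝ) 1)
    (hη1 : η1 ∈ Set.Ioo (0 : ℝ) 1) :
    ∃ p : Bool → Bool → Bool → ℝ,
      (∀ a0 l1 a1, p a0 l1 a1 ∈ Set.Ioo (0 : ℝ) 1) ∧
      ((η1 * (p true true false / p true false false) + 1 - η1) /
          (η0 * (p false true false / p false false false) + 1 - η0)) *
        (p true false false / p false false false) = s ∧
      p true true true / p true true false = t11 ∧
      p true false true / p true false false = t10 ∧
      p false true true / p false true false = t01 ∧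
      p false false true / p false false false = t00 :=
  stmt_9_general s t11 t10 t01 t00 hs ht11 ht10 ht01 ht00 η0 η1
end
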